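/- Let R be a commutative ring, Ã ∈ R^{l1×l0} and L̃ ∈ R^{l1'×l0'} matrices. Identify R^{1×l0} ⊗_R R^{1×l0'} with R^{1×l0·l0'} via eᵢ ⊗ eⱼ ↦ e_{(i−1)l0'+j}. Then coker(Ã) ⊗_R coker(L̃) is R-linearly isomorphic to coker(T), where T ∈ R^{(l1·l0'+l0·l1')×(l0·l0')} is the matrix obtained by stacking Ã ⊗ I_{l0'} on top of I_{l0} ⊗ L̃ (Kronecker products), the isomorphism sending (x + ⟨Ã⟩) ⊗ (y + ⟨L̃⟩) to the class of x ⊗ y. -/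

import Mathlib

open Matrix

section Preamble

variable {R : Type*} [Ring R]

/-- `⟨A⟩`: the left `R`-submodule of row vectors `R^{1×q}` generated by the rows
of the matrix `A`. -/
def rowSpan {m : Type*} {q : ℕ} (A : Matrix m (Fin q) R) : Submodule R (Fin q → R) :=
  Submodule.span R (Set.range A)

theorem rowSpan_le_iff {m : Type*} {q : ℕ} {A : Matrix m (Fin q) R}
    {N : Submodule R (Fin q → R)} : rowSpan A ≤ N ↔ ∀ i, A i ∈ N := by
  rw [rowSpan, Submodule.span_le]
  exact ⟨fun h i => h ⟨i, rfl⟩, fun h _ ⟨i, hi⟩ => hi ▸ h i⟩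

/-- A matrix `φ` with `⟨Aφ⟩ ≤ ⟨B⟩` induces an `R`-linear map
`coker A → coker B`, `x + ⟨A⟩ ↦ xφ + ⟨B⟩`. -/
def inducedMap {m m' : Type*} {q q' : ℕ} (A : Matrix m (Fin q) R) (B : Matrix m' (Fin q') R)
    (φ : Matrix (Fin q) (Fin q') R) (h : rowSpan (A * φ) ≤ rowSpan B) :
    ((Fin q → R) ⧸ rowSpan A) →ₗ[R] ((Fin q' → R) ⧸ rowSpan B) :=
  Submodule.mapQ _ _ φ.vecMulLinear (by
    rw [rowSpan, Submodule.span_le]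
    rintro _ ⟨i, rfl⟩
    have hAi : φ.vecMulLinear (A i) = (A * φ) i := by
      ext j
      simp [Matrix.vecMulLinear_apply, Matrix.mul_apply, Matrix.vecMul, dotProduct]
    have hmem := h (Submodule.subset_span ⟨i, rfl⟩)
    simp only [SetLike.mem_coe, Submodule.mem_comap, hAi]
    exact hmem)

end Preamble

/-- The row-major vectorization `row(A) ∈ R^{1×mn}` of a matrix `A ∈ R^{m×n}`:
`row(A)_{i·n+j} = A_{ij}` (`0`-indexed). -/
def rowVec {R : Type*} [Ring R] {m n : ℕ} (A : Matrix (Fin m) (Fin n) R) :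
    Fin (m * n) → R :=
  fun k => A (finProdFinEquiv.symm k).1 (finProdFinEquiv.symm k).2

/-- The Kronecker product `A ⊗ B := (a_{ij}B)`, reindexed so as to be indexed by
`Fin (m*p)` and `Fin (n*q)` in the row-major way. -/
def kron {R : Type*} [Ring R] {m n p q : ℕ} (A : Matrix (Fin m) (Fin n) R)
    (B : Matrix (Fin p) (Fin q) R) : Matrix (Fin (m * p)) (Fin (n * q)) R :=
  Matrix.reindex finProdFinEquiv finProdFinEquiv (Matrix.kroneckerMap (· * ·) A B)

/-- The row vector `x ⊗ y ∈ R^{1×ab}` corresponding to `x ∈ R^{1×a}`, `y ∈ R^{1×b}` under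
the row-major identification `R^{1×a} ⊗ R^{1×b} ≅ R^{1×ab}`, `eᵢ ⊗ eⱼ ↦ e_{i·b+j}`. -/
def tensorRow {R : Type*} [Ring R] {a b : ℕ} (x : Fin a → R) (y : Fin b → R) :
    Fin (a * b) → R :=
  fun k => x (finProdFinEquiv.symm k).1 * y (finProdFinEquiv.symm k).2

/-!
By right exactness of `⊗`, `coker Ã ⊗ coker L̃` is the quotient of `R^{1×l0} ⊗ R^{1×l0'}` by
`⟨Ã⟩ ⊗ R^{1×l0'} + R^{1×l0} ⊗ ⟨L̃⟩`. Under the row-major identification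
`R^{1×l0} ⊗ R^{1×l0'} ≅ R^{1×l0·l0'}` the image of `span S ⊗ span S'` is spanned by the products
`s ⊗ s'`, so for `S, S'` the rows of `Ã, I` (resp. `I, L̃`) these two summands become the row
spans of `Ã ⊗ I` and `I ⊗ L̃`, whose sum is `⟨T⟩`.
-/

section RowSpan

variable {R : Type*} [Ring R]

theorem rowSpan_fromRows {m₁ m₂ : Type*} {q : ℕ} (A : Matrix m₁ (Fin q) R)
    (B : Matrix m₂ (Fin q) R) : rowSpan (fromRows A B) = rowSpan A ⊔ rowSpan B := by
  rw [rowSpan, rowSpan, rowSpan, ← Submodule.span_union]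
  exact congrArg _ (Set.Sum.elim_range A B)

theorem rowSpan_one (n : ℕ) : rowSpan (1 : Matrix (Fin n) (Fin n) R) = ⊤ := by
  rw [← (Pi.basisFun R (Fin n)).span_eq, rowSpan]
  congr 2
  ext i j
  rw [Pi.basisFun_apply, one_eq_pi_single]

theorem kron_apply_finProdFinEquiv {m n p q : ℕ} (A : Matrix (Fin m) (Fin n) R)
    (B : Matrix (Fin p) (Fin q) R) (i : Fin m) (j : Fin p) :
    kron A B (finProdFinEquiv (i, j)) = tensorRow (A i) (B j) := by
  funext k
  simp [kron, tensorRow]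

end RowSpan

section TensorRow

open TensorProduct

variable {R : Type*} [CommRing R]

def tensorRowBilin (a b : ℕ) : (Fin a → R) →ₗ[R] (Fin b → R) →ₗ[R] (Fin (a * b) → R) :=
  LinearMap.mk₂ R tensorRow
    (fun x x' y => by funext k; simp [tensorRow, add_mul])
    (fun c x y => by funext k; simp [tensorRow, mul_assoc])
    (fun x y y' => by funext k; simp [tensorRow, mul_add])
    (fun c x y => by funext k; simp [tensorRow, mul_left_comm])

@[simp]
theorem tensorRowBilin_apply {a b : ℕ} (x : Fin a → R) (y : Fin b → R) :
    tensorRowBilin a b x y = tensorRow x y :=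
  rfl

theorem tensorRow_single_single {a b : ℕ} (i : Fin a) (j : Fin b) :
    tensorRow (Pi.single i (1 : R)) (Pi.single j 1) = Pi.single (finProdFinEquiv (i, j)) 1 := by
  funext k
  obtain ⟨⟨k₁, k₂⟩, rfl⟩ := finProdFinEquiv.surjective k
  simp only [tensorRow, Equiv.symm_apply_apply, Pi.single_apply, Equiv.apply_eq_iff_eq,
    Prod.ext_iff]
  split_ifs <;> simp_all

theorem rowSpan_kron {m n p q : ℕ} (A : Matrix (Fin m) (Fin n) R)
    (B : Matrix (Fin p) (Fin q) R) :
    rowSpan (kron A B) = Submodule.map₂ (tensorRowBilin n q) (rowSpan A) (rowSpan B) := by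
  rw [rowSpan, rowSpan, rowSpan, Submodule.map₂_span_span]
  congr 1
  ext v
  constructor
  · rintro ⟨k, rfl⟩
    obtain ⟨⟨i, j⟩, rfl⟩ := finProdFinEquiv.surjective k
    exact ⟨_, ⟨i, rfl⟩, _, ⟨j, rfl⟩, (kron_apply_finProdFinEquiv A B i j).symm⟩
  · rintro ⟨_, ⟨i, rfl⟩, _, ⟨j, rfl⟩, rfl⟩
    exact ⟨finProdFinEquiv (i, j), kron_apply_finProdFinEquiv A B i j⟩

/-- The row-major identification `R^{1×a} ⊗ R^{1×b} ≅ R^{1×ab}`, `eᵢ ⊗ eⱼ ↦ e_{i·b+j}`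
(`0`-indexed). -/
noncomputable def rowTensorEquiv (a b : ℕ) :
    ((Fin a → R) ⊗[R] (Fin b → R)) ≃ₗ[R] (Fin (a * b) → R) :=
  ((Pi.basisFun R (Fin a)).tensorProduct (Pi.basisFun R (Fin b))).equiv
    (Pi.basisFun R (Fin (a * b))) finProdFinEquiv

theorem mk_compr₂_rowTensorEquiv (a b : ℕ) :
    (mk R (Fin a → R) (Fin b → R)).compr₂ (rowTensorEquiv a b).toLinearMap =
      tensorRowBilin a b := by
  refine LinearMap.ext_basis (Pi.basisFun R (Fin a)) (Pi.basisFun R (Fin b)) fun i j => ?_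
  simp only [LinearMap.compr₂_apply, mk_apply, LinearEquiv.coe_coe, tensorRowBilin_apply,
    Pi.basisFun_apply, tensorRow_single_single]
  rw [rowTensorEquiv, ← Pi.basisFun_apply, ← Pi.basisFun_apply,
    ← Module.Basis.tensorProduct_apply, Module.Basis.equiv_apply, Pi.basisFun_apply]

theorem rowTensorEquiv_tmul {a b : ℕ} (x : Fin a → R) (y : Fin b → R) :
    rowTensorEquiv a b (x ⊗ₜ y) = tensorRow x y :=
  LinearMap.congr_fun₂ (mk_compr₂_rowTensorEquiv a b) x y

theorem map_rowTensorEquiv_range_map {M N : Type*} [AddCommGroup M] [Module R M]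
    [AddCommGroup N] [Module R N] {a b : ℕ} (f : M →ₗ[R] Fin a → R) (g : N →ₗ[R] Fin b → R) :
    (LinearMap.range (map f g)).map (rowTensorEquiv a b).toLinearMap =
      Submodule.map₂ (tensorRowBilin a b) (LinearMap.range f) (LinearMap.range g) := by
  rw [range_map, Submodule.map_map₂, mk_compr₂_rowTensorEquiv]

end TensorRow

open TensorProduct in
/-- `coker(Ã) ⊗ coker(L̃)` is isomorphic to the cokernel of the stacked
matrix `T = (Ã ⊗ I over I ⊗ L̃)`, the isomorphism sending `(x+⟨Ã⟩) ⊗ (y+⟨L̃⟩)` to the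
class of `x ⊗ y`. -/
theorem statement_11 {R : Type*} [CommRing R] {l1 l0 l1' l0' : ℕ}
    (A : Matrix (Fin l1) (Fin l0) R) (L : Matrix (Fin l1') (Fin l0') R) :
    let T := Matrix.fromRows (kron A (1 : Matrix (Fin l0') (Fin l0') R))
      (kron (1 : Matrix (Fin l0) (Fin l0) R) L)
    ∃ e : ((((Fin l0 → R) ⧸ rowSpan A)) ⊗[R] ((Fin l0' → R) ⧸ rowSpan L)) ≃ₗ[R]
        ((Fin (l0 * l0') → R) ⧸ rowSpan T),
      ∀ (x : Fin l0 → R) (y : Fin l0' → R),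
        e (Submodule.Quotient.mk x ⊗ₜ[R] Submodule.Quotient.mk y)
          = Submodule.Quotient.mk (tensorRow x y) := by
  intro T
  have hT : (LinearMap.range (map (rowSpan A).subtype LinearMap.id) ⊔
      LinearMap.range (map LinearMap.id (rowSpan L).subtype)).map
        (rowTensorEquiv l0 l0').toLinearMap = rowSpan T := by
    rw [Submodule.map_sup, map_rowTensorEquiv_range_map, map_rowTensorEquiv_range_map,
      rowSpan_fromRows, rowSpan_kron, rowSpan_kron, rowSpan_one, rowSpan_one,
      Submodule.range_subtype, Submodule.range_subtype, LinearMap.range_id, LinearMap.range_id]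
  refine ⟨(quotientTensorQuotientEquiv _ _).trans (Submodule.Quotient.equiv _ _ _ hT),
    fun x y => ?_⟩
  rw [LinearEquiv.trans_apply, quotientTensorQuotientEquiv_apply_tmul_mk_tmul_mk,
    Submodule.Quotient.equiv_apply, Submodule.mapQ_apply, LinearEquiv.coe_coe,
    rowTensorEquiv_tmul]
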